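/- In Cl_5, for all real numbers μ₁₂, λ₁₂₄, μ₁₃, λ₁₂₅, λ₁₃, μ₁₄, set x = μ₁₂ • (e₃*e₁*e₂) + λ₁₂₄ • (e₄*e₁*e₂) + μ₁₃ • (e₄*e₁*e₃) + λ₁₂₅ • (e₅*e₁*e₂) + λ₁₃ • (e₅*e₁*e₃) + μ₁₄ • (e₅*e₁*e₄). Then x is NOT a unit of Cl_5 if and only if there exists σ ∈ {1,-1} with μ₁₂ = σ·μ₁₄, λ₁₂₄ = -σ·λ₁₃ and μ₁₃ = σ·λ₁₂₅. (x is 4× the invariant Dirac operator of a metric on the nilpotent Lie algebra 𝒩₅,₂ = (0,0,12,13,14); the square of x has eigenvalues (μ₁₂ ∓ μ₁₄)² + (λ₁₂₄ ± λ₁₃)² + (μ₁₃ ∓ λ₁₂₅)², as in the 𝒩₅,₂ case of the paper's Theorem on 5-dimensional nilmanifolds.) -/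
import Mathlib


open scoped BigOperators

/-- The negative-definite quadratic form `Q v = -∑ i, (v i)^2` on `EuclideanSpace ℝ (Fin n)`. -/
noncomputable def Q (n : ℕ) : QuadraticForm ℝ (EuclideanSpace ℝ (Fin n)) :=
  QuadraticMap.ofPolar (fun v => -∑ i, v i ^ 2)
    (fun a v => by
      simp only [PiLp.smul_apply, smul_eq_mul, mul_pow]
      rw [← Finset.mul_sum]
      ring)
    (fun x x' y => by
      have h : ∀ (u w : EuclideanSpace ℝ (Fin n)),
          QuadraticMap.polar (fun v : EuclideanSpace ℝ (Fin n) => -∑ i, v i ^ 2) u w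
            = -(2 * ∑ i, u i * w i) := by
        intro u w
        have hsq : ∀ i, (u i + w i) ^ 2 = u i ^ 2 + w i ^ 2 + 2 * (u i * w i) := fun i => by ring
        simp_rw [QuadraticMap.polar, PiLp.add_apply, hsq, Finset.sum_add_distrib,
          ← Finset.mul_sum]
        ring
      simp_rw [h, PiLp.add_apply, add_mul, Finset.sum_add_distrib]
      ring)
    (fun a x y => by
      have h : ∀ (u w : EuclideanSpace ℝ (Fin n)),
          QuadraticMap.polar (fun v : EuclideanSpace ℝ (Fin n) => -∑ i, v i ^ 2) u w
            = -(2 * ∑ i, u i * w i) := by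
        intro u w
        have hsq : ∀ i, (u i + w i) ^ 2 = u i ^ 2 + w i ^ 2 + 2 * (u i * w i) := fun i => by ring
        simp_rw [QuadraticMap.polar, PiLp.add_apply, hsq, Finset.sum_add_distrib,
          ← Finset.mul_sum]
        ring
      simp_rw [h, PiLp.smul_apply, smul_eq_mul, mul_assoc, ← Finset.mul_sum]
      ring)

/-- The image in the Clifford algebra `Cl_n` of the `i`-th standard basis vector. -/
noncomputable def e {n : ℕ} (i : Fin n) : CliffordAlgebra (Q n) :=
  CliffordAlgebra.ι (Q n) (EuclideanSpace.single i 1)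


lemma Q_apply {n : ℕ} (v : EuclideanSpace ℝ (Fin n)) : Q n v = -∑ i, v i ^ 2 := rfl

lemma esq {n : ℕ} (i : Fin n) : e i * e i = -1 := by
  rw [e, CliffordAlgebra.ι_sq_scalar, Q_apply]
  have h : ∑ j, (EuclideanSpace.single i (1:ℝ)) j ^ 2 = 1 := by
    simp [EuclideanSpace.single_apply, apply_ite]
  rw [h]; simp

lemma eswap {n : ℕ} {i j : Fin n} (h : i ≠ j) : e i * e j = -(e j * e i) := by
  have hp := CliffordAlgebra.ι_mul_ι_add_swap (Q := Q n)
    (EuclideanSpace.single i (1:ℝ)) (EuclideanSpace.single j 1)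
  have hpol : QuadraticMap.polar (Q n) (EuclideanSpace.single i (1:ℝ))
      (EuclideanSpace.single j 1) = 0 := by
    simp only [QuadraticMap.polar, Q_apply, PiLp.add_apply]
    have hs : ∀ k, ((EuclideanSpace.single i (1:ℝ)) k + (EuclideanSpace.single j (1:ℝ)) k) ^ 2
        = (EuclideanSpace.single i (1:ℝ)) k ^ 2 + (EuclideanSpace.single j (1:ℝ)) k ^ 2
          + 2 * ((EuclideanSpace.single i (1:ℝ)) k * (EuclideanSpace.single j (1:ℝ)) k) :=
      fun k => by ring
    simp_rw [hs, Finset.sum_add_distrib]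
    have : ∀ k, (EuclideanSpace.single i (1:ℝ)) k * (EuclideanSpace.single j (1:ℝ)) k = 0 := by
      intro k
      simp only [EuclideanSpace.single_apply]
      by_cases hk : k = i <;> by_cases hk' : k = j <;> simp_all
    simp [this, Ne.symm h]
  rw [hpol, map_zero] at hp
  rw [← e, ← e] at hp
  exact eq_neg_of_add_eq_zero_left hp

lemma eswap' {n : ℕ} {i j : Fin n} (h : i ≠ j) (t : CliffordAlgebra (Q n)) :
    e i * (e j * t) = -(e j * (e i * t)) := by
  rw [← mul_assoc, eswap h, neg_mul, mul_assoc]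

lemma esq' {n : ℕ} (i : Fin n) (t : CliffordAlgebra (Q n)) :
    e i * (e i * t) = -t := by
  rw [← mul_assoc, esq, neg_one_mul]

lemma s10 : e (1 : Fin 5) * e 0 = -(e 0 * e 1) := eswap (by decide)
lemma s10' (t : CliffordAlgebra (Q 5)) : e (1 : Fin 5) * (e 0 * t) = -(e 0 * (e 1 * t)) := eswap' (by decide) t
lemma s20 : e (2 : Fin 5) * e 0 = -(e 0 * e 2) := eswap (by decide)
lemma s20' (t : CliffordAlgebra (Q 5)) : e (2 : Fin 5) * (e 0 * t) = -(e 0 * (e 2 * t)) := eswap' (by decide) t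
lemma s21 : e (2 : Fin 5) * e 1 = -(e 1 * e 2) := eswap (by decide)
lemma s21' (t : CliffordAlgebra (Q 5)) : e (2 : Fin 5) * (e 1 * t) = -(e 1 * (e 2 * t)) := eswap' (by decide) t
lemma s30 : e (3 : Fin 5) * e 0 = -(e 0 * e 3) := eswap (by decide)
lemma s30' (t : CliffordAlgebra (Q 5)) : e (3 : Fin 5) * (e 0 * t) = -(e 0 * (e 3 * t)) := eswap' (by decide) t
lemma s31 : e (3 : Fin 5) * e 1 = -(e 1 * e 3) := eswap (by decide)
lemma s31' (t : CliffordAlgebra (Q 5)) : e (3 : Fin 5) * (e 1 * t) = -(e 1 * (e 3 * t)) := eswap' (by decide) t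
lemma s32 : e (3 : Fin 5) * e 2 = -(e 2 * e 3) := eswap (by decide)
lemma s32' (t : CliffordAlgebra (Q 5)) : e (3 : Fin 5) * (e 2 * t) = -(e 2 * (e 3 * t)) := eswap' (by decide) t
lemma s40 : e (4 : Fin 5) * e 0 = -(e 0 * e 4) := eswap (by decide)
lemma s40' (t : CliffordAlgebra (Q 5)) : e (4 : Fin 5) * (e 0 * t) = -(e 0 * (e 4 * t)) := eswap' (by decide) t
lemma s41 : e (4 : Fin 5) * e 1 = -(e 1 * e 4) := eswap (by decide)
lemma s41' (t : CliffordAlgebra (Q 5)) : e (4 : Fin 5) * (e 1 * t) = -(e 1 * (e 4 * t)) := eswap' (by decide) t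
lemma s42 : e (4 : Fin 5) * e 2 = -(e 2 * e 4) := eswap (by decide)
lemma s42' (t : CliffordAlgebra (Q 5)) : e (4 : Fin 5) * (e 2 * t) = -(e 2 * (e 4 * t)) := eswap' (by decide) t
lemma s43 : e (4 : Fin 5) * e 3 = -(e 3 * e 4) := eswap (by decide)
lemma s43' (t : CliffordAlgebra (Q 5)) : e (4 : Fin 5) * (e 3 * t) = -(e 3 * (e 4 * t)) := eswap' (by decide) t

set_option maxHeartbeats 1000000 in
lemma key_sq (a b c d f g : ℝ) :
    (a • (e (2 : Fin 5) * e 0 * e 1) + b • (e (3 : Fin 5) * e 0 * e 1)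
      + c • (e (3 : Fin 5) * e 0 * e 2) + d • (e (4 : Fin 5) * e 0 * e 1)
      + f • (e (4 : Fin 5) * e 0 * e 2) + g • (e (4 : Fin 5) * e 0 * e 3)) *
    (a • (e (2 : Fin 5) * e 0 * e 1) + b • (e (3 : Fin 5) * e 0 * e 1)
      + c • (e (3 : Fin 5) * e 0 * e 2) + d • (e (4 : Fin 5) * e 0 * e 1)
      + f • (e (4 : Fin 5) * e 0 * e 2) + g • (e (4 : Fin 5) * e 0 * e 3))
    = (a^2+b^2+c^2+d^2+f^2+g^2) • (1 : CliffordAlgebra (Q 5))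
      + (2*(-(a*g)+b*f-c*d)) • (e (1 : Fin 5) * (e 2 * (e 3 * e 4))) := by
  simp only [mul_add, add_mul, smul_mul_assoc, mul_smul_comm, smul_smul, mul_assoc,
    neg_mul, mul_neg, smul_neg, neg_neg, mul_one, one_mul,
    esq, esq',
    s10, s10', s20, s20', s21, s21', s30, s30', s31, s31', s32, s32',
    s40, s40', s41, s41', s42, s42', s43, s43']
  module

lemma tau_sq : (e (1 : Fin 5) * (e 2 * (e 3 * e 4))) * (e 1 * (e 2 * (e 3 * e 4)))
    = (1 : CliffordAlgebra (Q 5)) := by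
  simp only [mul_assoc, neg_mul, mul_neg, smul_neg, neg_neg, mul_one, one_mul,
    esq, esq', s10, s10', s20, s20', s21, s21', s30, s30', s31, s31', s32, s32',
    s40, s40', s41, s41', s42, s42', s43, s43']

set_option maxHeartbeats 1000000 in
lemma key_comm (a b c d f g : ℝ) :
    (a • (e (2 : Fin 5) * e 0 * e 1) + b • (e (3 : Fin 5) * e 0 * e 1)
      + c • (e (3 : Fin 5) * e 0 * e 2) + d • (e (4 : Fin 5) * e 0 * e 1)
      + f • (e (4 : Fin 5) * e 0 * e 2) + g • (e (4 : Fin 5) * e 0 * e 3)) *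
    (e (1 : Fin 5) * (e 2 * (e 3 * e 4)))
    = (e (1 : Fin 5) * (e 2 * (e 3 * e 4))) *
    (a • (e (2 : Fin 5) * e 0 * e 1) + b • (e (3 : Fin 5) * e 0 * e 1)
      + c • (e (3 : Fin 5) * e 0 * e 2) + d • (e (4 : Fin 5) * e 0 * e 1)
      + f • (e (4 : Fin 5) * e 0 * e 2) + g • (e (4 : Fin 5) * e 0 * e 3)) := by
  simp only [mul_add, add_mul, smul_mul_assoc, mul_smul_comm, smul_smul, mul_assoc,
    neg_mul, mul_neg, smul_neg, neg_neg, mul_one, one_mul,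
    esq, esq', s10, s10', s20, s20', s21, s21', s30, s30', s31, s31', s32, s32',
    s40, s40', s41, s41', s42, s42', s43, s43']

open Complex in
noncomputable def gam : Fin 5 → Matrix (Fin 4) (Fin 4) ℂ
  | 0 => !![0,0,I,0; 0,0,0,I; I,0,0,0; 0,I,0,0]
  | 1 => !![0,0,1,0; 0,0,0,1; -1,0,0,0; 0,-1,0,0]
  | 2 => !![0,I,0,0; I,0,0,0; 0,0,0,-I; 0,0,-I,0]
  | 3 => !![0,1,0,0; -1,0,0,0; 0,0,0,-1; 0,0,1,0]
  | 4 => !![I,0,0,0; 0,-I,0,0; 0,0,-I,0; 0,0,0,I]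

noncomputable def mrep : EuclideanSpace ℝ (Fin 5) →ₗ[ℝ] Matrix (Fin 4) (Fin 4) ℂ where
  toFun v := ∑ i, v i • gam i
  map_add' u v := by
    simp [PiLp.add_apply, add_smul, Finset.sum_add_distrib]
  map_smul' r v := by
    simp [PiLp.smul_apply, smul_smul, Finset.smul_sum]

set_option maxHeartbeats 1000000 in
lemma mrep_cond (v : EuclideanSpace ℝ (Fin 5)) :
    mrep v * mrep v = algebraMap ℝ (Matrix (Fin 4) (Fin 4) ℂ) (Q 5 v) := by
  have hQ : Q 5 v = -∑ i, v i ^ 2 := rfl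
  rw [hQ]
  show (∑ i, v i • gam i) * (∑ i, v i • gam i) = _
  ext i j
  simp only [Fin.sum_univ_five, gam, Matrix.algebraMap_matrix_apply]
  fin_cases i <;> fin_cases j <;>
    simp [Matrix.mul_apply, Fin.sum_univ_four, Fin.sum_univ_five, Complex.ext_iff,
      ← Complex.ofReal_pow] <;>
    first
    | (constructor <;> ring)
    | (ring_nf; simp [Complex.I_sq, Complex.ext_iff]; push_cast; constructor <;> ring)
    | (ring_nf; simp [Complex.I_sq, Complex.ext_iff])
    | rfl

noncomputable def F : CliffordAlgebra (Q 5) →ₐ[ℝ] Matrix (Fin 4) (Fin 4) ℂ :=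
  CliffordAlgebra.lift (Q 5) ⟨mrep, mrep_cond⟩

lemma F_e (i : Fin 5) : F (e i) = gam i := by
  rw [e, F, CliffordAlgebra.lift_ι_apply]
  show ∑ j, (EuclideanSpace.single i (1:ℝ)) j • gam j = gam i
  simp [EuclideanSpace.single_apply, ite_smul]

lemma M02 : (gam 1 * (gam 2 * (gam 3 * gam 4))) 0 2 = -1 := by
  simp [gam, Matrix.mul_apply, Fin.sum_univ_four]

lemma tau_ne (σ : ℝ) (hσ : σ ≠ 0) :
    (1 : CliffordAlgebra (Q 5)) + σ • (e 1 * (e 2 * (e 3 * e 4))) ≠ 0 := by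
  intro h
  have h2 := congrArg F h
  rw [map_add, map_one, map_smul, map_mul, map_mul, map_mul, F_e, F_e, F_e, F_e,
    map_zero] at h2
  have h3 := congrArg (fun A => A 0 2) h2
  simp only [Matrix.add_apply, Matrix.one_apply, Matrix.smul_apply, Matrix.zero_apply, M02] at h3
  rw [if_neg (by decide)] at h3
  rw [Complex.real_smul] at h3
  have : (σ : ℂ) = 0 := by linear_combination -h3
  exact hσ (by exact_mod_cast this)

set_option maxHeartbeats 1000000 in
/-- **The `𝒩₅,₂` case.** In `Cl₅`, the element
`x = μ₁₂ • (e₃e₁e₂) + λ₁₂₄ • (e₄e₁e₂) + μ₁₃ • (e₄e₁e₃) + λ₁₂₅ • (e₅e₁e₂)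
   + λ₁₃ • (e₅e₁e₃) + μ₁₄ • (e₅e₁e₄)`
fails to be a unit iff `μ₁₂ = σ μ₁₄`, `λ₁₂₄ = -σ λ₁₃`, `μ₁₃ = σ λ₁₂₅` for some `σ = ±1`. -/
theorem clifford_N52_dirac (μ₁₂ lam₁₂₄ μ₁₃ lam₁₂₅ lam₁₃ μ₁₄ : ℝ)
    (x : CliffordAlgebra (Q 5))
    (hx : x = μ₁₂ • (e (2 : Fin 5) * e 0 * e 1) + lam₁₂₄ • (e (3 : Fin 5) * e 0 * e 1)
        + μ₁₃ • (e (3 : Fin 5) * e 0 * e 2) + lam₁₂₅ • (e (4 : Fin 5) * e 0 * e 1)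
        + lam₁₃ • (e (4 : Fin 5) * e 0 * e 2) + μ₁₄ • (e (4 : Fin 5) * e 0 * e 3)) :
    ¬ IsUnit x ↔ ∃ σ : ℝ, (σ = 1 ∨ σ = -1)
        ∧ μ₁₂ = σ * μ₁₄ ∧ lam₁₂₄ = -(σ * lam₁₃) ∧ μ₁₃ = σ * lam₁₂₅ := by
  have hxx : x * x
      = (μ₁₂^2 + lam₁₂₄^2 + μ₁₃^2 + lam₁₂₅^2 + lam₁₃^2 + μ₁₄^2) • (1 : CliffordAlgebra (Q 5))
        + (2*(-(μ₁₂*μ₁₄) + lam₁₂₄*lam₁₃ - μ₁₃*lam₁₂₅)) • (e (1 : Fin 5) * (e 2 * (e 3 * e 4))) := by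
    rw [hx]; exact key_sq _ _ _ _ _ _
  constructor
  · intro hnu
    by_contra hn
    have k1 : (μ₁₂-μ₁₄)^2 + (lam₁₂₄+lam₁₃)^2 + (μ₁₃-lam₁₂₅)^2 ≠ 0 := by
      intro h0
      exact hn ⟨1, Or.inl rfl,
        by nlinarith [sq_nonneg (μ₁₂-μ₁₄), sq_nonneg (lam₁₂₄+lam₁₃), sq_nonneg (μ₁₃-lam₁₂₅)],
        by nlinarith [sq_nonneg (μ₁₂-μ₁₄), sq_nonneg (lam₁₂₄+lam₁₃), sq_nonneg (μ₁₃-lam₁₂₅)],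
        by nlinarith [sq_nonneg (μ₁₂-μ₁₄), sq_nonneg (lam₁₂₄+lam₁₃), sq_nonneg (μ₁₃-lam₁₂₅)]⟩
    have k2 : (μ₁₂+μ₁₄)^2 + (lam₁₂₄-lam₁₃)^2 + (μ₁₃+lam₁₂₅)^2 ≠ 0 := by
      intro h0
      exact hn ⟨-1, Or.inr rfl,
        by nlinarith [sq_nonneg (μ₁₂+μ₁₄), sq_nonneg (lam₁₂₄-lam₁₃), sq_nonneg (μ₁₃+lam₁₂₅)],
        by nlinarith [sq_nonneg (μ₁₂+μ₁₄), sq_nonneg (lam₁₂₄-lam₁₃), sq_nonneg (μ₁₃+lam₁₂₅)],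
        by nlinarith [sq_nonneg (μ₁₂+μ₁₄), sq_nonneg (lam₁₂₄-lam₁₃), sq_nonneg (μ₁₃+lam₁₂₅)]⟩
    have hc : ((μ₁₂-μ₁₄)^2 + (lam₁₂₄+lam₁₃)^2 + (μ₁₃-lam₁₂₅)^2)
        * ((μ₁₂+μ₁₄)^2 + (lam₁₂₄-lam₁₃)^2 + (μ₁₃+lam₁₂₅)^2) ≠ 0 := mul_ne_zero k1 k2
    have hxτ : x * (e (1 : Fin 5) * (e 2 * (e 3 * e 4)))
        = (e (1 : Fin 5) * (e 2 * (e 3 * e 4))) * x := by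
      rw [hx]; exact key_comm _ _ _ _ _ _
    set z : CliffordAlgebra (Q 5) :=
      (μ₁₂^2 + lam₁₂₄^2 + μ₁₃^2 + lam₁₂₅^2 + lam₁₃^2 + μ₁₄^2) • (1 : CliffordAlgebra (Q 5))
        - (2*(-(μ₁₂*μ₁₄) + lam₁₂₄*lam₁₃ - μ₁₃*lam₁₂₅)) • (e (1 : Fin 5) * (e 2 * (e 3 * e 4)))
      with hzdef
    have hz : (x * x) * z = (((μ₁₂-μ₁₄)^2 + (lam₁₂₄+lam₁₃)^2 + (μ₁₃-lam₁₂₅)^2)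
        * ((μ₁₂+μ₁₄)^2 + (lam₁₂₄-lam₁₃)^2 + (μ₁₃+lam₁₂₅)^2)) • (1 : CliffordAlgebra (Q 5)) := by
      rw [hxx, hzdef]
      simp only [mul_sub, sub_mul, add_mul, mul_add, smul_mul_assoc, mul_smul_comm, smul_smul,
        mul_one, one_mul, tau_sq]
      module
    have hzx : z * x = x * z := by
      rw [hzdef]
      simp only [sub_mul, mul_sub, smul_mul_assoc, mul_smul_comm, one_mul, mul_one, hxτ]
    set cst : ℝ := ((μ₁₂-μ₁₄)^2 + (lam₁₂₄+lam₁₃)^2 + (μ₁₃-lam₁₂₅)^2)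
        * ((μ₁₂+μ₁₄)^2 + (lam₁₂₄-lam₁₃)^2 + (μ₁₃+lam₁₂₅)^2) with hcst
    have hinv1 : x * (cst⁻¹ • (x * z)) = 1 := by
      rw [mul_smul_comm, ← mul_assoc, hz, smul_smul, inv_mul_cancel₀ hc, one_smul]
    have hinv2 : (cst⁻¹ • (x * z)) * x = 1 := by
      rw [smul_mul_assoc, mul_assoc, hzx, ← mul_assoc, hz, smul_smul, inv_mul_cancel₀ hc,
        one_smul]
    exact hnu ⟨⟨x, cst⁻¹ • (x * z), hinv1, hinv2⟩, rfl⟩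
  · rintro ⟨σ, hσ1, ha, hb, hc'⟩ hu
    have hσ2 : σ * σ = 1 := by rcases hσ1 with rfl | rfl <;> norm_num
    have hσ0 : σ ≠ 0 := by rcases hσ1 with rfl | rfl <;> norm_num
    have hS : (μ₁₂^2 + lam₁₂₄^2 + μ₁₃^2 + lam₁₂₅^2 + lam₁₃^2 + μ₁₄^2)
        + 2*(-(μ₁₂*μ₁₄) + lam₁₂₄*lam₁₃ - μ₁₃*lam₁₂₅)*σ = 0 := by
      rw [ha, hb, hc']
      linear_combination (-(μ₁₄^2 + lam₁₃^2 + lam₁₂₅^2)) * hσ2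
    have hT : (μ₁₂^2 + lam₁₂₄^2 + μ₁₃^2 + lam₁₂₅^2 + lam₁₃^2 + μ₁₄^2)*σ
        + 2*(-(μ₁₂*μ₁₄) + lam₁₂₄*lam₁₃ - μ₁₃*lam₁₂₅) = 0 := by
      rw [ha, hb, hc']
      linear_combination ((μ₁₄^2 + lam₁₃^2 + lam₁₂₅^2)*σ) * hσ2
    have h0 : (x * x) * ((1 : CliffordAlgebra (Q 5)) + σ • (e 1 * (e 2 * (e 3 * e 4))))
        = ((μ₁₂^2 + lam₁₂₄^2 + μ₁₃^2 + lam₁₂₅^2 + lam₁₃^2 + μ₁₄^2)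
            + 2*(-(μ₁₂*μ₁₄) + lam₁₂₄*lam₁₃ - μ₁₃*lam₁₂₅)*σ) • (1 : CliffordAlgebra (Q 5))
          + ((μ₁₂^2 + lam₁₂₄^2 + μ₁₃^2 + lam₁₂₅^2 + lam₁₃^2 + μ₁₄^2)*σ
            + 2*(-(μ₁₂*μ₁₄) + lam₁₂₄*lam₁₃ - μ₁₃*lam₁₂₅)) • (e (1 : Fin 5) * (e 2 * (e 3 * e 4))) := by
      rw [hxx]
      simp only [mul_add, add_mul, mul_smul_comm, smul_mul_assoc, smul_smul, mul_one, one_mul,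
        tau_sq]
      module
    have h1 : x * (x * ((1 : CliffordAlgebra (Q 5)) + σ • (e 1 * (e 2 * (e 3 * e 4))))) = 0 := by
      rw [← mul_assoc, h0, hS, hT]
      simp
    obtain ⟨u, hu'⟩ := hu
    have hcancel : ∀ v : CliffordAlgebra (Q 5), x * v = 0 → v = 0 := by
      intro v hv
      calc v = (↑u⁻¹ * ↑u) * v := by simp
        _ = ↑u⁻¹ * (x * v) := by rw [mul_assoc, hu']
        _ = 0 := by rw [hv, mul_zero]
    exact tau_ne σ hσ0 (hcancel _ (hcancel _ h1))
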